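/- Let $q = p^r$ and $a \in \mathbb{F}_p$, $j \geq 1$. Let $\alpha(t)$ denote the compositional inverse of $t + at^{1+qj}$ in the Nottingham group over $\mathbb{F}_p$. Then $\alpha(t) \equiv t/(1 + a t^{qj}) \pmod{t^{q^2 j}\,\mathbb{F}_p[[t]]}$. -/

import Mathlib

open PowerSeries Finset

/-- Composition of power series `f ∘ g` (intended for `g` with zero constant term). -/
noncomputable def pcomp {k : Type} [CommRing k] (f g : PowerSeries k) : PowerSeries k :=
  PowerSeries.mk fun n =>
    PowerSeries.coeff n (Polynomial.eval₂ (PowerSeries.C) g (PowerSeries.trunc (n + 1) f))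

/-- `n`-fold compositional iterate of `f`. -/
noncomputable def pcompIter {k : Type} [CommRing k] (f : PowerSeries k) : ℕ → PowerSeries k
  | 0 => PowerSeries.X
  | n + 1 => pcomp f (pcompIter f n)

/-- Membership in the Nottingham group: `f = t + a₂ t² + ⋯`. -/
def IsNott {k : Type} [CommRing k] (f : PowerSeries k) : Prop :=
  PowerSeries.coeff 0 f = 0 ∧ PowerSeries.coeff 1 f = 1

section lucas
variable (p : ℕ) [Fact p.Prime]

lemma lucasCast (n k : ℕ) :
    ((n.choose k : ℕ) : ZMod p) =
      (((n % p).choose (k % p) * ((n / p).choose (k / p)) : ℕ) : ZMod p) := by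
  have h := Choose.choose_modEq_choose_mod_mul_choose_div (n := n) (k := k) (p := p)
  have h2 := (ZMod.intCast_eq_intCast_iff _ _ _).mpr h
  exact_mod_cast h2

lemma keyB : ∀ r M i : ℕ, p ^ (r + 1) ∣ M → 1 ≤ i → i < p ^ (r + 1) →
    ((M.choose i : ℕ) : ZMod p) = 0 := by
  have hp : 1 < p := (Fact.out : p.Prime).one_lt
  intro r
  induction r with
  | zero =>
    intro M i hM hi1 hi
    rw [pow_one] at hM hi
    rw [lucasCast]
    have hM0 : M % p = 0 := Nat.eq_zero_of_dvd_of_lt ((Nat.dvd_mod_iff dvd_rfl).mpr hM)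
      (Nat.mod_lt _ (by omega))
    rw [hM0, Nat.mod_eq_of_lt hi, Nat.div_eq_of_lt hi,
      Nat.choose_eq_zero_of_lt (by omega), Nat.zero_mul, Nat.cast_zero]
  | succ r IH =>
    intro M i hM hi1 hi
    have hpM : p ∣ M := dvd_trans (dvd_pow_self p (Nat.succ_ne_zero _)) hM
    have hM0 : M % p = 0 := Nat.eq_zero_of_dvd_of_lt ((Nat.dvd_mod_iff dvd_rfl).mpr hpM)
      (Nat.mod_lt _ (by omega))
    rw [lucasCast, hM0]
    by_cases hip : i % p = 0
    · have hpi : p ∣ i := Nat.dvd_of_mod_eq_zero hip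
      have h1 : 1 ≤ i / p := (Nat.one_le_div_iff (by omega)).mpr (Nat.le_of_dvd (by omega) hpi)
      have h2 : i / p < p ^ (r + 1) := by
        rw [Nat.div_lt_iff_lt_mul (by omega)]
        calc i < p ^ (r + 2) := hi
        _ = p ^ (r + 1) * p := by ring
      have h3 : p ^ (r + 1) ∣ M / p := by
        apply Nat.dvd_div_of_mul_dvd
        calc p * p ^ (r + 1) = p ^ (r + 2) := by ring
        _ ∣ M := hM
      have := IH (M / p) (i / p) h3 h1 h2
      rw [Nat.cast_mul, this, mul_zero]
    · rw [Nat.choose_eq_zero_of_lt (by omega), Nat.zero_mul, Nat.cast_zero]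

lemma keyA (r M i : ℕ) (hM : p ^ (r + 1) ∣ M) (hi2 : 2 ≤ i) (hi : i < p ^ (r + 1)) :
    (((1 + M).choose i : ℕ) : ZMod p) = 0 := by
  have hp : 1 < p := (Fact.out : p.Prime).one_lt
  have hpM : p ∣ M := dvd_trans (dvd_pow_self p (Nat.succ_ne_zero _)) hM
  obtain ⟨m, rfl⟩ := hpM
  have hmod : (1 + p * m) % p = 1 := by
    rw [Nat.add_mul_mod_self_left, Nat.mod_eq_of_lt hp]
  have hdiv : (1 + p * m) / p = m := by
    rw [Nat.add_mul_div_left _ _ (by omega : 0 < p), Nat.div_eq_of_lt hp, Nat.zero_add]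
  rw [lucasCast, hmod, hdiv]
  by_cases hip : i % p ≤ 1
  · have hip1 : 1 ≤ i / p := by
      rcases Nat.eq_zero_or_pos (i / p) with h | h
      · exfalso; have h0 := Nat.mod_add_div i p
        rw [h, Nat.mul_zero] at h0; omega
      · exact h
    rcases r with _ | r'
    · exfalso
      rw [pow_one] at hi
      rw [Nat.mod_eq_of_lt hi] at hip; omega
    · have h2 : i / p < p ^ (r' + 1) := by
        rw [Nat.div_lt_iff_lt_mul (by omega)]
        calc i < p ^ (r' + 2) := hi
        _ = p ^ (r' + 1) * p := by ring
      have h3 : p ^ (r' + 1) ∣ p * m / p := by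
        rw [Nat.mul_div_cancel_left _ (by omega : 0 < p)]
        have : p * p ^ (r' + 1) ∣ p * m := by
          calc p * p ^ (r' + 1) = p ^ (r' + 2) := by ring
          _ ∣ p * m := hM
        exact (Nat.mul_dvd_mul_iff_left (by omega : 0 < p)).mp this
      have := keyB p r' m (i / p)
        (by rwa [Nat.mul_div_cancel_left _ (by omega : 0 < p)] at h3) hip1 h2
      rw [Nat.cast_mul, this, mul_zero]
  · rw [Nat.choose_eq_zero_of_lt (by omega), Nat.zero_mul, Nat.cast_zero]

lemma keyC (M : ℕ) (hM : p ∣ M) : (((1 + M).choose 1 : ℕ) : ZMod p) = 1 := by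
  rw [Nat.choose_one_right, Nat.cast_add, Nat.cast_one,
    (ZMod.natCast_eq_zero_iff M p).mpr hM, add_zero]

lemma fpow_expand (a : ZMod p) (d k : ℕ) :
    (PowerSeries.X + PowerSeries.C a * PowerSeries.X ^ (1 + d)) ^ k =
      ∑ i ∈ range (k + 1),
        PowerSeries.C (a ^ i * ((k.choose i : ℕ) : ZMod p)) *
          PowerSeries.X ^ (k + d * i) := by
  have hf : (PowerSeries.X + PowerSeries.C a * PowerSeries.X ^ (1 + d))
      = PowerSeries.X * (PowerSeries.C a * PowerSeries.X ^ d + 1) := by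
    rw [pow_add, pow_one]; ring
  rw [hf, mul_pow, add_pow, Finset.mul_sum]
  apply sum_congr rfl
  intro i _
  rw [one_pow, mul_one, mul_pow, ← map_pow, ← pow_mul, map_mul, map_natCast, pow_add, pow_mul]
  ring

lemma coeff_fpow (a : ZMod p) (d k n : ℕ) :
    PowerSeries.coeff n
        ((PowerSeries.X + PowerSeries.C a * PowerSeries.X ^ (1 + d)) ^ k) =
      ∑ i ∈ range (k + 1),
        (if k + d * i = n then a ^ i * ((k.choose i : ℕ) : ZMod p) else 0) := by
  rw [fpow_expand, map_sum]
  apply sum_congr rfl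
  intro i _
  rw [coeff_C_mul, coeff_X_pow]
  by_cases h : k + d * i = n
  · rw [if_pos h, if_pos h.symm, mul_one]
  · rw [if_neg h, if_neg (fun hh => h hh.symm), mul_zero]

lemma pcomp_coeff_eq (a : ZMod p) (d : ℕ) (α : PowerSeries (ZMod p))
    (h2 : pcomp α (PowerSeries.X + PowerSeries.C a * PowerSeries.X ^ (1 + d))
            = PowerSeries.X) (n : ℕ) :
    (∑ k ∈ range (n + 1), PowerSeries.coeff k α *
        ∑ i ∈ range (k + 1), (if k + d * i = n then a ^ i * ((k.choose i : ℕ) : ZMod p) else 0))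
      = (if n = 1 then 1 else 0) := by
  have h := congrArg (PowerSeries.coeff n) h2
  rw [pcomp, coeff_mk, eval₂_trunc_eq_sum_range, map_sum, coeff_X] at h
  rw [← h]
  apply sum_congr rfl
  intro k _
  rw [coeff_C_mul, coeff_fpow]

end lucas

theorem stmt16 (p : ℕ) [Fact p.Prime] (r : ℕ) (hr : 1 ≤ r) (q : ℕ) (hq : q = p ^ r)
    (j : ℕ) (hj : 1 ≤ j) (a : ZMod p) (α : PowerSeries (ZMod p))
    (hα0 : PowerSeries.coeff 0 α = 0)
    (h1 : pcomp (PowerSeries.X + PowerSeries.C a * PowerSeries.X ^ (1 + q * j)) α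
            = PowerSeries.X)
    (h2 : pcomp α (PowerSeries.X + PowerSeries.C a * PowerSeries.X ^ (1 + q * j))
            = PowerSeries.X) :
    ∀ m, m < q ^ 2 * j →
      PowerSeries.coeff m α =
        (if m = 0 then 0
         else if (q * j) ∣ (m - 1) then (-a) ^ ((m - 1) / (q * j)) else 0) := by
  obtain ⟨r', rfl⟩ : ∃ r', r = r' + 1 := ⟨r - 1, by omega⟩
  set d := q * j with hdEq
  have hp2 : 2 ≤ p := (Fact.out : p.Prime).two_le
  have hq2 : 2 ≤ q := by
    rw [hq]
    calc 2 ≤ p := hp2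
    _ = p ^ 1 := (pow_one p).symm
    _ ≤ p ^ (r' + 1) := Nat.pow_le_pow_right (by omega) (by omega)
  have hpq : p ∣ q := by rw [hq]; exact dvd_pow_self p (Nat.succ_ne_zero r')
  have hd2 : 2 ≤ d := by
    calc 2 ≤ q := hq2
    _ = q * 1 := (Nat.mul_one q).symm
    _ ≤ q * j := Nat.mul_le_mul_left q hj
  have hqd : q ∣ d := ⟨j, hdEq⟩
  have hNd : q ^ 2 * j = d * q := by rw [hdEq]; ring
  intro m
  induction m using Nat.strong_induction_on with
  | _ m IH =>
  intro hm
  rcases Nat.eq_zero_or_pos m with rfl | hm1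
  · simp [hα0]
  -- general coefficient equation
  have E := pcomp_coeff_eq p a d α h2 m
  rw [Finset.sum_range_succ] at E
  -- the k = m inner sum equals 1
  have hinner_m : (∑ i ∈ range (m + 1),
      (if m + d * i = m then a ^ i * ((m.choose i : ℕ) : ZMod p) else 0)) = 1 := by
    rw [Finset.sum_eq_single_of_mem 0 (mem_range.mpr (by omega))]
    · simp
    · intro i _ hi0
      apply if_neg
      have h1i : 1 ≤ i := by omega
      have : d ≤ d * i := Nat.le_mul_of_pos_right d (by omega)
      omega
  rw [hinner_m, mul_one] at E
  by_cases hdvd : d ∣ (m - 1)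
  · -- m = 1 + d * s
    obtain ⟨s, hs⟩ := hdvd
    have hm' : m = 1 + d * s := by omega
    have hsq : s < q := by
      have h1 : d * s < d * q := by
        have := hm
        rw [hNd] at this
        omega
      exact lt_of_mul_lt_mul_left h1 (by omega)
    have hdivs : (m - 1) / d = s := by
      rw [hs, Nat.mul_div_cancel_left s (by omega : 0 < d)]
    rw [if_neg (by omega : ¬ m = 0), if_pos ⟨s, hs⟩, hdivs]
    rcases Nat.eq_zero_or_pos s with rfl | hs1
    · -- s = 0, m = 1
      have hm1' : m = 1 := by omega
      subst hm1'
      rw [if_pos rfl] at E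
      have h0 : (∑ k ∈ range 1, PowerSeries.coeff k α *
          ∑ i ∈ range (k + 1),
            (if k + d * i = 1 then a ^ i * ((k.choose i : ℕ) : ZMod p) else 0)) = 0 := by
        rw [Finset.sum_range_one, Finset.sum_range_one, if_neg (by omega), mul_zero]
      rw [h0, zero_add] at E
      simpa using E
    · -- s ≥ 1
      set k₀ := 1 + d * (s - 1) with hk₀
      have hds : d * s = d * (s - 1) + d := by
        rw [← Nat.mul_succ]; congr 1; omega
      have hk₀m : k₀ < m := by omega
      have hmne1 : m ≠ 1 := by omega
      rw [if_neg hmne1] at E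
      -- the head sum reduces to the k₀ term
      have hS : (∑ k ∈ range m, PowerSeries.coeff k α *
          ∑ i ∈ range (k + 1),
            (if k + d * i = m then a ^ i * ((k.choose i : ℕ) : ZMod p) else 0))
          = PowerSeries.coeff k₀ α *
            ∑ i ∈ range (k₀ + 1),
              (if k₀ + d * i = m then a ^ i * ((k₀.choose i : ℕ) : ZMod p) else 0) := by
        apply Finset.sum_eq_single_of_mem k₀ (mem_range.mpr hk₀m)
        intro k hk hne
        rw [mem_range] at hk
        have hinner0 : (∑ i ∈ range (k + 1),
            (if k + d * i = m then a ^ i * ((k.choose i : ℕ) : ZMod p) else 0)) = 0 := by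
          apply Finset.sum_eq_zero
          intro i hi_mem
          rw [mem_range] at hi_mem
          by_cases hc : k + d * i = m
          · rw [if_pos hc]
            have hk1 : 1 ≤ k := by
              rcases Nat.eq_zero_or_pos k with rfl | h
              · exfalso
                have : i = 0 := by omega
                subst this
                simp at hc; omega
              · exact h
            have his : i ≤ s := by
              by_contra hcon
              have : d * s < d * i := mul_lt_mul_of_pos_left (show s < i by omega) (show 0 < d by omega)
              omega
            have hdsi : d * s = d * (s - i) + d * i := by
              rw [← Nat.mul_add]; congr 1; omega
            have hine0 : i ≠ 0 := by
              intro h0; subst h0; simp at hc; omega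
            have hine1 : i ≠ 1 := by
              intro h1; subst h1
              apply hne
              omega
            have hi2 : 2 ≤ i := by omega
            have hk' : k = 1 + d * (s - i) := by omega
            rw [hk']
            have hMdvd : p ^ (r' + 1) ∣ d * (s - i) := by
              rw [← hq]
              obtain ⟨t, ht⟩ := hqd
              exact ⟨t * (s - i), by rw [ht, mul_assoc]⟩
            rw [keyA p r' (d * (s - i)) i hMdvd hi2 (by rw [← hq]; omega), mul_zero]
          · rw [if_neg hc]
        rw [hinner0, mul_zero]
      rw [hS] at E
      -- inner sum at k₀ equals a
      have hinner_k₀ : (∑ i ∈ range (k₀ + 1),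
          (if k₀ + d * i = m then a ^ i * ((k₀.choose i : ℕ) : ZMod p) else 0)) = a := by
        rw [Finset.sum_eq_single_of_mem 1 (mem_range.mpr (by omega))]
        · rw [if_pos (by omega), pow_one, hk₀,
            keyC p (d * (s - 1)) (dvd_mul_of_dvd_left (dvd_trans hpq hqd) _), mul_one]
        · intro i _ hne1
          apply if_neg
          intro hc
          apply hne1
          have : d * i = d * 1 := by rw [Nat.mul_one]; omega
          exact Nat.eq_of_mul_eq_mul_left (by omega) this
      rw [hinner_k₀] at E
      -- coefficient at k₀ by induction
      have hck₀ : PowerSeries.coeff k₀ α = (-a) ^ (s - 1) := by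
        have h := IH k₀ hk₀m (lt_trans hk₀m hm)
        rw [if_neg (by omega : ¬ k₀ = 0), if_pos ⟨s - 1, by omega⟩] at h
        rw [h]
        congr 1
        rw [show k₀ - 1 = d * (s - 1) by omega,
          Nat.mul_div_cancel_left _ (by omega : 0 < d)]
      rw [hck₀] at E
      have hpow : (-a) ^ s = (-a) ^ (s - 1) * (-a) := by
        conv_lhs => rw [show s = (s - 1) + 1 by omega]
        rw [pow_succ]
      have : PowerSeries.coeff m α = -((-a) ^ (s - 1) * a) := by
        linear_combination E
      rw [this, hpow]; ring
  · -- d does not divide m - 1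
    have hmne1 : m ≠ 1 := by
      intro h; subst h; exact hdvd ⟨0, by omega⟩
    rw [if_neg hmne1] at E
    have hS : (∑ k ∈ range m, PowerSeries.coeff k α *
        ∑ i ∈ range (k + 1),
          (if k + d * i = m then a ^ i * ((k.choose i : ℕ) : ZMod p) else 0)) = 0 := by
      apply Finset.sum_eq_zero
      intro k hk
      rw [mem_range] at hk
      rcases Nat.eq_zero_or_pos k with rfl | hk1
      · rw [Finset.sum_range_one, if_neg (by omega), mul_zero]
      by_cases hdk : d ∣ (k - 1)
      · -- inner sum vanishes
        have hinner0 : (∑ i ∈ range (k + 1),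
            (if k + d * i = m then a ^ i * ((k.choose i : ℕ) : ZMod p) else 0)) = 0 := by
          apply Finset.sum_eq_zero
          intro i _
          apply if_neg
          intro hc
          apply hdvd
          obtain ⟨t, ht⟩ := hdk
          exact ⟨t + i, by rw [Nat.mul_add]; omega⟩
        rw [hinner0, mul_zero]
      · rw [IH k hk (lt_trans hk hm), if_neg (by omega : ¬ k = 0), if_neg hdk, zero_mul]
    rw [hS, zero_add] at E
    rw [if_neg (by omega : ¬ m = 0), if_neg hdvd]
    exact E
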